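/- Fix ε > 0 and let g : ℝ → ℝ be continuous and bounded. The differential equation ε·y' = 2x·y + ε·g(x) + ε·α admits a solution bounded on all of ℝ if and only if α = −(∫_{-∞}^{∞} e^{-t²/ε} g(t) dt)/(∫_{-∞}^{∞} e^{-t²/ε} dt), and in that case the bounded solution is unique and equals e^{x²/ε} ∫_{-∞}^x e^{-t²/ε} (g(t)+α) dt. -/

import Mathlib

/-!
Multiplying by the integrating factor `w x = exp (-x ^ 2 / ε)` turns the equation into
`(w y)' = w (g + α)`, so every solution is `y = (c + ∫_{-∞}^x w (g + α)) / w`. The key estimate is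
the Gaussian tail bound `∫_s w ≤ w x ∫_ℝ w` for `s = (-∞, x)` with `x ≤ 0` or `s = [x, ∞)` with
`x ≥ 0`, which follows from `t² ≥ x² + (t - x)²` whenever `x (t - x) ≥ 0`. Since `1 / w` blows up at
both ends, boundedness at `-∞` forces `c = 0`, and boundedness at `+∞` then forces
`∫_ℝ w (g + α) = 0`, which is the formula for `α`. Conversely, when this total integral vanishes,
the tail bound at both ends shows that the solution with `c = 0` is bounded.
-/

open MeasureTheory Set Filter Topology Real

namespace CanardValue

variable {ε : ℝ}

lemma integrable_exp_neg_sq_div (hε : 0 < ε) : Integrable fun t : ℝ => exp (-t ^ 2 / ε) := by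
  simpa only [neg_div, div_eq_inv_mul, neg_mul, mul_neg] using
    integrable_exp_neg_mul_sq (inv_pos.2 hε)

lemma integral_exp_neg_sq_div_pos (hε : 0 < ε) : 0 < ∫ t : ℝ, exp (-t ^ 2 / ε) :=
  integral_exp_pos (integrable_exp_neg_sq_div hε)

lemma exp_sq_div_mul_exp_neg_sq_div (x : ℝ) : exp (x ^ 2 / ε) * exp (-x ^ 2 / ε) = 1 := by
  rw [← exp_add, show x ^ 2 / ε + -x ^ 2 / ε = 0 by ring, exp_zero]

lemma tendsto_exp_neg_sq_div_cocompact (hε : 0 < ε) :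
    Tendsto (fun x : ℝ => exp (-x ^ 2 / ε)) (cocompact ℝ) (𝓝 0) := by
  have hsq : Tendsto (fun x : ℝ => ‖x‖ ^ 2 / ε) (cocompact ℝ) atTop :=
    ((tendsto_pow_atTop two_ne_zero).comp tendsto_norm_cocompact_atTop).atTop_div_const hε
  refine (tendsto_exp_atBot.comp (tendsto_neg_atTop_atBot.comp hsq)).congr fun x => ?_
  simp [neg_div]

lemma eq_zero_of_abs_le_mul_exp_neg_sq_div (hε : 0 < ε) {l : Filter ℝ} [l.NeBot]
    (hl : l ≤ cocompact ℝ) {c K : ℝ} (h : ∀ᶠ x in l, |c| ≤ K * exp (-x ^ 2 / ε)) : c = 0 := by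
  have hK := ((tendsto_exp_neg_sq_div_cocompact hε).mono_left hl).const_mul K
  rw [mul_zero] at hK
  exact abs_nonpos_iff.1 (ge_of_tendsto hK h)

lemma exp_neg_sq_div_le_mul (hε : 0 ≤ ε) {x t : ℝ} (hxt : 0 ≤ x * (t - x)) :
    exp (-t ^ 2 / ε) ≤ exp (-x ^ 2 / ε) * exp (-(t - x) ^ 2 / ε) := by
  rw [← exp_add, ← add_div]
  exact exp_le_exp.2 (div_le_div_of_nonneg_right (by nlinarith) hε)

lemma setIntegral_exp_neg_sq_div_le (hε : 0 < ε) {s : Set ℝ} (hs : MeasurableSet s) {x : ℝ}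
    (hsx : ∀ t ∈ s, 0 ≤ x * (t - x)) :
    ∫ t in s, exp (-t ^ 2 / ε) ≤ exp (-x ^ 2 / ε) * ∫ t : ℝ, exp (-t ^ 2 / ε) := by
  have hshift : Integrable fun t : ℝ => exp (-(t - x) ^ 2 / ε) :=
    (integrable_exp_neg_sq_div hε).comp_sub_right x
  calc ∫ t in s, exp (-t ^ 2 / ε)
      ≤ ∫ t in s, exp (-x ^ 2 / ε) * exp (-(t - x) ^ 2 / ε) :=
        setIntegral_mono_on (integrable_exp_neg_sq_div hε).integrableOn
          (hshift.const_mul _).integrableOn hs fun t ht => exp_neg_sq_div_le_mul hε.le (hsx t ht)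
    _ = exp (-x ^ 2 / ε) * ∫ t in s, exp (-(t - x) ^ 2 / ε) := integral_const_mul _ _
    _ ≤ exp (-x ^ 2 / ε) * ∫ t, exp (-(t - x) ^ 2 / ε) :=
        mul_le_mul_of_nonneg_left
          (setIntegral_le_integral hshift (Eventually.of_forall fun t => (exp_pos _).le))
          (exp_pos _).le
    _ = exp (-x ^ 2 / ε) * ∫ t : ℝ, exp (-t ^ 2 / ε) := by
        rw [integral_sub_right_eq_self (fun t => exp (-t ^ 2 / ε)) x]

lemma hasDerivAt_integral_Iio {E : Type*} [NormedAddCommGroup E] [NormedSpace ℝ E]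
    [CompleteSpace E] {f : ℝ → E} (hf : Continuous f) (hfi : Integrable f) (x : ℝ) :
    HasDerivAt (fun u => ∫ t in Iio u, f t) (f x) x := by
  have hsplit : (fun u => ∫ t in Iio u, f t) =
      fun u => (∫ t in (0 : ℝ)..u, f t) + ∫ t in Iic 0, f t := by
    funext u
    rw [← intervalIntegral.integral_Iic_sub_Iic hfi.integrableOn hfi.integrableOn,
      sub_add_cancel, setIntegral_congr_set Iio_ae_eq_Iic]
  rw [hsplit]
  exact (hf.integral_hasStrictDerivAt 0 x).hasDerivAt.add_const _

variable {h : ℝ → ℝ} {C : ℝ}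

lemma integrable_exp_neg_sq_div_mul (hε : 0 < ε) (hh : AEStronglyMeasurable h)
    (hC : ∀ t, |h t| ≤ C) : Integrable fun t => exp (-t ^ 2 / ε) * h t :=
  (integrable_exp_neg_sq_div hε).mul_bdd hh (Eventually.of_forall hC)

lemma abs_setIntegral_exp_neg_sq_div_mul_le (hε : 0 < ε) (hC : ∀ t, |h t| ≤ C) {s : Set ℝ}
    (hs : MeasurableSet s) {x : ℝ} (hsx : ∀ t ∈ s, 0 ≤ x * (t - x)) :
    |∫ t in s, exp (-t ^ 2 / ε) * h t| ≤
      C * (∫ t : ℝ, exp (-t ^ 2 / ε)) * exp (-x ^ 2 / ε) := by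
  have hC0 : 0 ≤ C := (abs_nonneg _).trans (hC 0)
  calc |∫ t in s, exp (-t ^ 2 / ε) * h t|
      ≤ ∫ t in s, C * exp (-t ^ 2 / ε) := by
        rw [← Real.norm_eq_abs]
        refine norm_integral_le_of_norm_le ((integrable_exp_neg_sq_div hε).const_mul C).integrableOn
          (Eventually.of_forall fun t => ?_)
        rw [norm_mul, norm_of_nonneg (exp_pos _).le, mul_comm]
        gcongr
        exact hC t
    _ = C * ∫ t in s, exp (-t ^ 2 / ε) := integral_const_mul _ _
    _ ≤ C * (exp (-x ^ 2 / ε) * ∫ t : ℝ, exp (-t ^ 2 / ε)) := by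
        gcongr
        exact setIntegral_exp_neg_sq_div_le hε hs hsx
    _ = C * (∫ t : ℝ, exp (-t ^ 2 / ε)) * exp (-x ^ 2 / ε) := by ring

lemma hasDerivAt_exp_neg_sq_div_mul (hε : ε ≠ 0) {y : ℝ → ℝ} {x : ℝ}
    (hy : HasDerivAt y ((2 * x * y x + ε * h x) / ε) x) :
    HasDerivAt (fun u => exp (-u ^ 2 / ε) * y u) (exp (-x ^ 2 / ε) * h x) x := by
  have hw : HasDerivAt (fun u : ℝ => -u ^ 2 / ε) (-(2 * x) / ε) x := by
    simpa using (hasDerivAt_pow 2 x).neg.div_const ε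
  refine (hw.exp.mul hy).congr_deriv ?_
  field_simp
  ring

lemma hasDerivAt_exp_sq_div_mul (hε : ε ≠ 0) {Φ : ℝ → ℝ} {x : ℝ}
    (hΦ : HasDerivAt Φ (exp (-x ^ 2 / ε) * h x) x) :
    HasDerivAt (fun u => exp (u ^ 2 / ε) * Φ u)
      ((2 * x * (exp (x ^ 2 / ε) * Φ x) + ε * h x) / ε) x := by
  have hw : HasDerivAt (fun u : ℝ => u ^ 2 / ε) (2 * x / ε) x := by
    simpa using (hasDerivAt_pow 2 x).div_const ε
  refine (hw.exp.mul hΦ).congr_deriv ?_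
  rw [← mul_assoc, exp_sq_div_mul_exp_neg_sq_div, one_mul]
  field_simp

noncomputable def canardSolution (ε : ℝ) (h : ℝ → ℝ) (x : ℝ) : ℝ :=
  exp (x ^ 2 / ε) * ∫ t in Iio x, exp (-t ^ 2 / ε) * h t

lemma hasDerivAt_canardSolution (hε : ε ≠ 0) (hh : Continuous h)
    (hi : Integrable fun t => exp (-t ^ 2 / ε) * h t) (x : ℝ) :
    HasDerivAt (canardSolution ε h) ((2 * x * canardSolution ε h x + ε * h x) / ε) x :=
  hasDerivAt_exp_sq_div_mul hε (hasDerivAt_integral_Iio (by fun_prop) hi x)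

lemma abs_canardSolution_le (hε : 0 < ε) (hh : Continuous h) (hC : ∀ t, |h t| ≤ C)
    (hzero : ∫ t, exp (-t ^ 2 / ε) * h t = 0) (x : ℝ) :
    |canardSolution ε h x| ≤ C * ∫ t : ℝ, exp (-t ^ 2 / ε) := by
  have hF : |∫ t in Iio x, exp (-t ^ 2 / ε) * h t| ≤
      C * (∫ t : ℝ, exp (-t ^ 2 / ε)) * exp (-x ^ 2 / ε) := by
    rcases le_total x 0 with hx | hx
    · exact abs_setIntegral_exp_neg_sq_div_mul_le hε hC measurableSet_Iio
        fun t ht => mul_nonneg_of_nonpos_of_nonpos hx (sub_nonpos.2 ht.le)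
    · have hsplit := integral_add_compl (measurableSet_Iio (a := x))
        (integrable_exp_neg_sq_div_mul hε hh.aestronglyMeasurable hC)
      rw [compl_Iio, hzero, add_eq_zero_iff_eq_neg] at hsplit
      rw [hsplit, abs_neg]
      exact abs_setIntegral_exp_neg_sq_div_mul_le hε hC measurableSet_Ici
        fun t ht => mul_nonneg hx (sub_nonneg.2 ht)
  calc |canardSolution ε h x|
      = exp (x ^ 2 / ε) * |∫ t in Iio x, exp (-t ^ 2 / ε) * h t| := by
        rw [canardSolution, abs_mul, abs_exp]
    _ ≤ exp (x ^ 2 / ε) * (C * (∫ t : ℝ, exp (-t ^ 2 / ε)) * exp (-x ^ 2 / ε)) := by gcongr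
    _ = C * ∫ t : ℝ, exp (-t ^ 2 / ε) := by
        rw [mul_comm, mul_assoc, mul_comm (exp _), exp_sq_div_mul_exp_neg_sq_div, mul_one]

lemma integral_Iio_eq_exp_neg_sq_div_mul_of_bounded (hε : 0 < ε) (hh : Continuous h)
    (hC : ∀ t, |h t| ≤ C) {y : ℝ → ℝ} (hy : ∀ x, HasDerivAt y ((2 * x * y x + ε * h x) / ε) x)
    {B : ℝ} (hB : ∀ x, |y x| ≤ B) (x : ℝ) :
    ∫ t in Iio x, exp (-t ^ 2 / ε) * h t = exp (-x ^ 2 / ε) * y x := by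
  set F := fun u => ∫ t in Iio u, exp (-t ^ 2 / ε) * h t
  have hderiv : ∀ u, HasDerivAt (fun u => exp (-u ^ 2 / ε) * y u - F u) 0 u := fun u =>
    ((hasDerivAt_exp_neg_sq_div_mul hε.ne' (hy u)).sub (hasDerivAt_integral_Iio (by fun_prop)
      (integrable_exp_neg_sq_div_mul hε hh.aestronglyMeasurable hC) u)).congr_deriv (sub_self _)
  have hconst : ∀ u, exp (-u ^ 2 / ε) * y u - F u = exp (-x ^ 2 / ε) * y x - F x := fun u =>
    is_const_of_deriv_eq_zero (fun u => (hderiv u).differentiableAt) (fun u => (hderiv u).deriv) u x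
  suffices exp (-x ^ 2 / ε) * y x - F x = 0 by linarith
  refine eq_zero_of_abs_le_mul_exp_neg_sq_div hε atBot_le_cocompact
    (K := B + C * ∫ t : ℝ, exp (-t ^ 2 / ε)) ?_
  filter_upwards [eventually_le_atBot 0] with u hu
  rw [← hconst u]
  calc |exp (-u ^ 2 / ε) * y u - F u| ≤ |exp (-u ^ 2 / ε) * y u| + |F u| := abs_sub _ _
    _ ≤ exp (-u ^ 2 / ε) * B + C * (∫ t : ℝ, exp (-t ^ 2 / ε)) * exp (-u ^ 2 / ε) := by
        refine add_le_add ?_ (abs_setIntegral_exp_neg_sq_div_mul_le hε hC measurableSet_Iio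
          fun t ht => mul_nonneg_of_nonpos_of_nonpos hu (sub_nonpos.2 ht.le))
        rw [abs_mul, abs_exp]
        exact mul_le_mul_of_nonneg_left (hB u) (exp_pos _).le
    _ = (B + C * ∫ t : ℝ, exp (-t ^ 2 / ε)) * exp (-u ^ 2 / ε) := by ring

lemma eq_canardSolution_of_bounded (hε : 0 < ε) (hh : Continuous h) (hC : ∀ t, |h t| ≤ C)
    {y : ℝ → ℝ} (hy : ∀ x, HasDerivAt y ((2 * x * y x + ε * h x) / ε) x) {B : ℝ}
    (hB : ∀ x, |y x| ≤ B) (x : ℝ) : y x = canardSolution ε h x := by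
  rw [canardSolution, integral_Iio_eq_exp_neg_sq_div_mul_of_bounded hε hh hC hy hB x, ← mul_assoc,
    exp_sq_div_mul_exp_neg_sq_div, one_mul]

lemma integral_exp_neg_sq_div_mul_eq_zero_of_bounded (hε : 0 < ε) (hh : Continuous h)
    (hC : ∀ t, |h t| ≤ C) {y : ℝ → ℝ} (hy : ∀ x, HasDerivAt y ((2 * x * y x + ε * h x) / ε) x)
    {B : ℝ} (hB : ∀ x, |y x| ≤ B) : ∫ t, exp (-t ^ 2 / ε) * h t = 0 := by
  refine eq_zero_of_abs_le_mul_exp_neg_sq_div hε atTop_le_cocompact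
    (K := B + C * ∫ t : ℝ, exp (-t ^ 2 / ε)) ?_
  filter_upwards [eventually_ge_atTop 0] with x hx
  rw [← integral_add_compl (measurableSet_Iio (a := x))
      (integrable_exp_neg_sq_div_mul hε hh.aestronglyMeasurable hC), compl_Iio,
    integral_Iio_eq_exp_neg_sq_div_mul_of_bounded hε hh hC hy hB x]
  calc |exp (-x ^ 2 / ε) * y x + ∫ t in Ici x, exp (-t ^ 2 / ε) * h t|
      ≤ |exp (-x ^ 2 / ε) * y x| + |∫ t in Ici x, exp (-t ^ 2 / ε) * h t| := abs_add_le _ _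
    _ ≤ exp (-x ^ 2 / ε) * B + C * (∫ t : ℝ, exp (-t ^ 2 / ε)) * exp (-x ^ 2 / ε) := by
        refine add_le_add ?_ (abs_setIntegral_exp_neg_sq_div_mul_le hε hC measurableSet_Ici
          fun t ht => mul_nonneg hx (sub_nonneg.2 ht))
        rw [abs_mul, abs_exp]
        exact mul_le_mul_of_nonneg_left (hB x) (exp_pos _).le
    _ = (B + C * ∫ t : ℝ, exp (-t ^ 2 / ε)) * exp (-x ^ 2 / ε) := by ring

lemma integral_exp_neg_sq_div_mul_add_eq_zero_iff (hε : 0 < ε) {g : ℝ → ℝ}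
    (hg : Integrable fun t => exp (-t ^ 2 / ε) * g t) (α : ℝ) :
    ∫ t, exp (-t ^ 2 / ε) * (g t + α) = 0 ↔
      α = -(∫ t : ℝ, exp (-t ^ 2 / ε) * g t) / ∫ t : ℝ, exp (-t ^ 2 / ε) := by
  simp only [mul_add]
  rw [integral_add hg ((integrable_exp_neg_sq_div hε).mul_const α), integral_mul_const,
    eq_div_iff (integral_exp_neg_sq_div_pos hε).ne']
  constructor <;> intro <;> linarith

end CanardValue

open CanardValue

/-- For fixed `ε > 0` and `g` continuous and bounded, the equation
`ε y' = 2xy + εg(x) + εα` has a solution bounded on all of `ℝ` iff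
`α = -(∫ e^{-t²/ε} g)/(∫ e^{-t²/ε})`, and in that case the bounded solution is
unique and equals `e^{x²/ε} ∫_{-∞}^x e^{-t²/ε}(g(t)+α) dt`. -/
theorem canard_value_unique (ε : ℝ) (hε : 0 < ε) (g : ℝ → ℝ) (hg : Continuous g)
    (M : ℝ) (hM : ∀ x, |g x| ≤ M) (α : ℝ) :
    ((∃ y : ℝ → ℝ, (∀ x, HasDerivAt y ((2 * x * y x + ε * (g x + α)) / ε) x) ∧
        ∃ B, ∀ x, |y x| ≤ B) ↔
      α = -(∫ t : ℝ, Real.exp (-t ^ 2 / ε) * g t) / (∫ t : ℝ, Real.exp (-t ^ 2 / ε))) ∧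
    (α = -(∫ t : ℝ, Real.exp (-t ^ 2 / ε) * g t) / (∫ t : ℝ, Real.exp (-t ^ 2 / ε)) →
      ∀ y : ℝ → ℝ, (∀ x, HasDerivAt y ((2 * x * y x + ε * (g x + α)) / ε) x) →
        (∃ B, ∀ x, |y x| ≤ B) →
        ∀ x, y x = Real.exp (x ^ 2 / ε) *
          ∫ t in Set.Iio x, Real.exp (-t ^ 2 / ε) * (g t + α)) := by
  have hh : Continuous fun t => g t + α := hg.add continuous_const
  have hC : ∀ t, |g t + α| ≤ M + |α| := fun t => (abs_add_le _ _).trans (by linarith [hM t])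
  have hcanard := integral_exp_neg_sq_div_mul_add_eq_zero_iff hε
    (integrable_exp_neg_sq_div_mul hε hg.aestronglyMeasurable hM) α
  refine ⟨⟨fun ⟨y, hy, B, hB⟩ => ?_, fun hα => ?_⟩, fun _ y hy ⟨B, hB⟩ x => ?_⟩
  · exact hcanard.1 (integral_exp_neg_sq_div_mul_eq_zero_of_bounded hε hh hC hy hB)
  · exact ⟨canardSolution ε fun t => g t + α,
      hasDerivAt_canardSolution hε.ne' hh
        (integrable_exp_neg_sq_div_mul hε hh.aestronglyMeasurable hC),
      _, abs_canardSolution_le hε hh hC (hcanard.2 hα)⟩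
  · exact eq_canardSolution_of_bounded hε hh hC hy hB x
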